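/- The CP-rank of a block diagonal matrix is the sum of the CP-ranks of its blocks: if M = diag(M₁, M₂) with M₁, M₂ completely positive, then rank_cp(M) = rank_cp(M₁) + rank_cp(M₂). -/

import Mathlib

/-!
Placing CP factorizations of `M₁` and `M₂` side by side, each vector padded with zeros, factors
`diag(M₁, M₂)`; this gives `≤`. Conversely, in a nonnegative factorization of `diag(M₁, M₂)` each
off-diagonal entry is a sum of nonnegative products that vanishes, so every vector is supported
inside one of the two blocks. Restricting the vectors to each block factors `M₁` and `M₂`, and
the vectors that are nonzero on the first block are disjoint from those nonzero on the second,
which gives `≥`.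
-/

noncomputable def cpRank {n : Type*} [Fintype n] (M : Matrix n n ℝ) : ℕ :=
  sInf {r : ℕ | ∃ a : Fin r → n → ℝ,
    (∀ ℓ i, 0 ≤ a ℓ i) ∧ M = ∑ ℓ, Matrix.vecMulVec (a ℓ) (a ℓ)}

open Matrix Finset

def IsCPFactorization {n ι : Type*} [Fintype ι] (M : Matrix n n ℝ) (a : ι → n → ℝ) :
    Prop :=
  (∀ ℓ i, 0 ≤ a ℓ i) ∧ M = ∑ ℓ, vecMulVec (a ℓ) (a ℓ)

namespace IsCPFactorization

variable {n ι : Type*} [Fintype ι] {M : Matrix n n ℝ} {a : ι → n → ℝ}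

lemma exists_fin (h : IsCPFactorization M a) :
    ∃ b : Fin (Fintype.card ι) → n → ℝ, IsCPFactorization M b := by
  let e := Fintype.equivFin ι
  refine ⟨a ∘ e.symm, fun ℓ i => h.1 _ i, ?_⟩
  rw [h.2, ← e.symm.sum_comp]
  rfl

lemma restrict (h : IsCPFactorization M a) (S : Finset ι) (hS : ∀ ℓ ∉ S, a ℓ = 0) :
    IsCPFactorization M fun ℓ : S => a ℓ := by
  refine ⟨fun ℓ => h.1 ℓ, ?_⟩
  rw [h.2, Finset.sum_coe_sort S (fun ℓ => vecMulVec (a ℓ) (a ℓ))]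
  refine (sum_subset (subset_univ S) fun ℓ _ hℓ => ?_).symm
  simp [hS ℓ hℓ]

lemma submatrix {m : Type*} (h : IsCPFactorization M a) (e : m → n) :
    IsCPFactorization (M.submatrix e e) fun ℓ => a ℓ ∘ e := by
  refine ⟨fun ℓ i => h.1 ℓ (e i), ?_⟩
  ext i j
  simp [h.2, Matrix.sum_apply, vecMulVec_apply]

lemma mul_eq_zero_of_apply_eq_zero (h : IsCPFactorization M a) {i j : n} (hij : M i j = 0)
    (ℓ : ι) : a ℓ i * a ℓ j = 0 := by
  rw [h.2, Matrix.sum_apply] at hij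
  exact (sum_eq_zero_iff_of_nonneg fun k _ => mul_nonneg (h.1 k i) (h.1 k j)).1 hij ℓ
    (mem_univ ℓ)

lemma fromBlocks {κ σ : Type*} [Fintype σ] {N : Matrix κ κ ℝ} {b : σ → κ → ℝ}
    (ha : IsCPFactorization M a) (hb : IsCPFactorization N b) :
    IsCPFactorization (fromBlocks M 0 0 N)
      (Sum.elim (fun ℓ => Sum.elim (a ℓ) 0) (fun ℓ => Sum.elim 0 (b ℓ))) := by
  refine ⟨?_, ?_⟩
  · rintro (ℓ | ℓ) (i | i) <;> simp [ha.1, hb.1]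
  · ext (i | i) (j | j) <;> simp [ha.2, hb.2, Matrix.sum_apply, vecMulVec_apply]

end IsCPFactorization

section

variable {n : Type*} [Fintype n] {M : Matrix n n ℝ}

lemma cpRank_le_card {ι : Type*} [Fintype ι] {a : ι → n → ℝ} (h : IsCPFactorization M a) :
    cpRank M ≤ Fintype.card ι :=
  Nat.sInf_le h.exists_fin

lemma cpRank_le_card_of_forall_notMem {ι : Type*} [Fintype ι] {a : ι → n → ℝ}
    (h : IsCPFactorization M a) (S : Finset ι) (hS : ∀ ℓ ∉ S, a ℓ = 0) : cpRank M ≤ #S :=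
  (cpRank_le_card (h.restrict S hS)).trans_eq (Fintype.card_coe S)

lemma exists_isCPFactorization_cpRank
    (h : ∃ (r : ℕ) (a : Fin r → n → ℝ), IsCPFactorization M a) :
    ∃ a : Fin (cpRank M) → n → ℝ, IsCPFactorization M a :=
  Nat.sInf_mem h

end

lemma le_cpRank_fromBlocks {m n : Type*} [Fintype m] [Fintype n]
    {M₁ : Matrix m m ℝ} {M₂ : Matrix n n ℝ}
    (h : ∃ (r : ℕ) (a : Fin r → m ⊕ n → ℝ), IsCPFactorization (fromBlocks M₁ 0 0 M₂) a) :
    cpRank M₁ + cpRank M₂ ≤ cpRank (fromBlocks M₁ 0 0 M₂) := by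
  classical
  obtain ⟨a, ha⟩ := exists_isCPFactorization_cpRank h
  have hsupp (ℓ) : a ℓ ∘ Sum.inl = 0 ∨ a ℓ ∘ Sum.inr = 0 := by
    by_contra! hne
    obtain ⟨i, hi⟩ := Function.ne_iff.1 hne.1
    obtain ⟨j, hj⟩ := Function.ne_iff.1 hne.2
    exact mul_ne_zero hi hj
      (ha.mul_eq_zero_of_apply_eq_zero (fromBlocks_apply₁₂ _ _ _ _ i j) ℓ)
  let S₁ : Finset _ := {ℓ | a ℓ ∘ Sum.inl ≠ 0}
  let S₂ : Finset _ := {ℓ | a ℓ ∘ Sum.inr ≠ 0}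
  calc cpRank M₁ + cpRank M₂
      ≤ #S₁ + #S₂ :=
        add_le_add (cpRank_le_card_of_forall_notMem (ha.submatrix Sum.inl) S₁ (by simp [S₁]))
          (cpRank_le_card_of_forall_notMem (ha.submatrix Sum.inr) S₂ (by simp [S₂]))
    _ = #(S₁ ∪ S₂) :=
        (card_union_of_disjoint <| disjoint_left.2 fun ℓ h₁ h₂ => by
          simp only [S₁, S₂, mem_filter] at h₁ h₂
          exact (hsupp ℓ).elim h₁.2 h₂.2).symm
    _ ≤ cpRank (fromBlocks M₁ 0 0 M₂) := (card_le_univ _).trans_eq (Fintype.card_fin _)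

theorem cpRank_blockDiag {m n : ℕ}
    (M₁ : Matrix (Fin m) (Fin m) ℝ) (M₂ : Matrix (Fin n) (Fin n) ℝ)
    (h₁ : ∃ (r : ℕ) (a : Fin r → Fin m → ℝ),
      (∀ ℓ i, 0 ≤ a ℓ i) ∧ M₁ = ∑ ℓ, Matrix.vecMulVec (a ℓ) (a ℓ))
    (h₂ : ∃ (r : ℕ) (a : Fin r → Fin n → ℝ),
      (∀ ℓ i, 0 ≤ a ℓ i) ∧ M₂ = ∑ ℓ, Matrix.vecMulVec (a ℓ) (a ℓ)) :
    cpRank (Matrix.fromBlocks M₁ 0 0 M₂) = cpRank M₁ + cpRank M₂ := by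
  obtain ⟨a₁, ha₁⟩ := exists_isCPFactorization_cpRank h₁
  obtain ⟨a₂, ha₂⟩ := exists_isCPFactorization_cpRank h₂
  have hblock := ha₁.fromBlocks ha₂
  refine le_antisymm ?_ (le_cpRank_fromBlocks ⟨_, hblock.exists_fin⟩)
  simpa using cpRank_le_card hblock
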